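/- arXiv:2103.15253 — 2 statements merged into one kernel-verified Lean document; each statement's English description precedes it below -/
import Mathlib

section
/- Let G be a simple graph on n vertices with δ(G) ≥ n/2 + 1. Then the edge scramble E(G), whose eggs are the two-element vertex sets of the edges of G, has order exactly n − α(G), where α(G) is the independence number of G. -/
open SimpleGraph Finset

attribute [local instance] Classical.propDecidable

variable {V : Type*}

/-- The number of edges of `G` between `A` and its complement
(counted as ordered pairs going from `A` to `Aᶜ`, so each crossing edge counts once). -/
noncomputable def crossingEdges [Fintype V] (G : SimpleGraph V) (A : Finset V) : ℕ :=
  (Finset.univ.filter (fun p : V × V => p.1 ∈ A ∧ p.2 ∉ A ∧ G.Adj p.1 p.2)).card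

/-- A scramble on `G`: a nonempty collection of nonempty connected vertex subsets (eggs). -/
def IsScramble (G : SimpleGraph V) (S : Finset (Finset V)) : Prop :=
  S.Nonempty ∧ ∀ E ∈ S, E.Nonempty ∧ (G.induce (E : Set V)).Connected

/-- The minimum size of a hitting set for the eggs of `S`. -/
noncomputable def hitNum (S : Finset (Finset V)) : ℕ :=
  sInf {k | ∃ C : Finset V, (∀ E ∈ S, (E ∩ C).Nonempty) ∧ C.card = k}

/-- The minimum size of an egg-cut of `S`, as an extended natural number
(`⊤` if no egg-cut exists). -/
noncomputable def cutNum [Fintype V] (G : SimpleGraph V) (S : Finset (Finset V)) : ℕ∞ :=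
  sInf {k : ℕ∞ | ∃ A : Finset V, (∃ E ∈ S, E ⊆ A) ∧ (∃ E ∈ S, E ⊆ Aᶜ) ∧
    k = (crossingEdges G A : ℕ∞)}

/-- The order of a scramble: the minimum of the smallest hitting set size and the
smallest egg-cut size. -/
noncomputable def scrambleOrder [Fintype V] (G : SimpleGraph V) (S : Finset (Finset V)) : ℕ :=
  (min (hitNum S : ℕ∞) (cutNum G S)).toNat

/-- The scramble number of `G`: the maximum order of a scramble on `G`. -/
noncomputable def scrambleNumber [Fintype V] (G : SimpleGraph V) : ℕ :=
  sSup {k | ∃ S : Finset (Finset V), IsScramble G S ∧ k = scrambleOrder G S}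

/-- The edge-connectivity of `G`: the minimum number of edges whose removal
disconnects `G` (0 if `G` is disconnected). -/
noncomputable def edgeConnectivity [Fintype V] (G : SimpleGraph V) : ℕ :=
  sInf {k | ∃ D : Finset (Sym2 V), ↑D ⊆ G.edgeSet ∧ D.card = k ∧
    ¬ (G.deleteEdges ↑D).Connected}

/-- The vertex-connectivity of `G`: the minimum size of a set of vertices whose removal
disconnects the graph or leaves a single vertex. -/
noncomputable def vertexConnectivity [Fintype V] (G : SimpleGraph V) : ℕ :=
  sInf {k | ∃ S : Finset V, S ≠ Finset.univ ∧ S.card = k ∧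
    (¬ (G.induce ((↑S)ᶜ : Set V)).Connected ∨ (Sᶜ : Finset V).card = 1)}

/-- The Laplacian of a function `f : V → ℤ` at a vertex `v`: the net number of chips
lost at `v` when each vertex `u` is fired `f u` times. -/
noncomputable def lapAt [Fintype V] (G : SimpleGraph V) (f : V → ℤ) (v : V) : ℤ :=
  ∑ u ∈ G.neighborFinset v, (f v - f u)

/-- Two divisors are equivalent when they differ by a sequence of chip-firing moves. -/
def LinEquiv [Fintype V] (G : SimpleGraph V) (D D' : V → ℤ) : Prop :=
  ∃ f : V → ℤ, ∀ v, D v - D' v = lapAt G f v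

/-- A divisor is effective when it is nonnegative everywhere. -/
def Effective (D : V → ℤ) : Prop := ∀ v, 0 ≤ D v

/-- The degree of a divisor: the total number of chips. -/
noncomputable def degDiv [Fintype V] (D : V → ℤ) : ℤ := ∑ v, D v

/-- A divisor has positive rank when, for any vertex `q`, the divisor minus one chip at `q`
is equivalent to an effective divisor. -/
def PositiveRank [Fintype V] (G : SimpleGraph V) (D : V → ℤ) : Prop :=
  ∀ q : V, ∃ D', Effective D' ∧ LinEquiv G (fun v => D v - if v = q then 1 else 0) D'

/-- The (divisorial) gonality of `G`: the minimum degree of an effective divisor of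
positive rank. -/
noncomputable def gonality [Fintype V] (G : SimpleGraph V) : ℕ :=
  sInf {d : ℕ | ∃ D : V → ℤ, Effective D ∧ degDiv D = d ∧ PositiveRank G D}

/-- The independence number of `G`: the maximum size of a set of pairwise
non-adjacent vertices. -/
noncomputable def indepNum [Fintype V] (G : SimpleGraph V) : ℕ :=
  sSup {k | ∃ S : Finset V, (∀ u ∈ S, ∀ v ∈ S, u ≠ v → ¬ G.Adj u v) ∧ S.card = k}

/-- The `ℓ`-th cone over `G`: add `ℓ` new vertices, each adjacent to every other vertex. -/
def cone (G : SimpleGraph V) (ℓ : ℕ) : SimpleGraph (V ⊕ Fin ℓ) :=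
  SimpleGraph.fromRel (fun x y => match x, y with
    | Sum.inl u, Sum.inl v => G.Adj u v
    | _, _ => True)

noncomputable def edgeScramble [Fintype V] (G : SimpleGraph V) : Finset (Finset V) :=
  Finset.univ.filter (fun E : Finset V => ∃ u v, G.Adj u v ∧ E = {u, v})

/-! A hitting set of the edge scramble is a vertex cover, i.e. the complement of an independent
set, so the hitting number is `n - α`. An egg-cut has at least two vertices on each side, and a
vertex on the smaller side `A` sends at least `δ + 1 - #A` edges across; with `2 δ ≥ n + 2` this
gives at least `n ≥ n - α` crossing edges, so the order is the hitting number. -/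

section CrossingEdges

variable [Fintype V] (G : SimpleGraph V) (A : Finset V)

lemma crossingEdges_eq_sum : crossingEdges G A = ∑ v ∈ A, #(G.neighborFinset v \ A) := by
  rw [crossingEdges,
    card_eq_sum_card_fiberwise (f := Prod.fst) (t := A) fun p hp => (mem_filter.1 hp).2.1]
  refine sum_congr rfl fun v hv => ?_
  have hfiber : {p ∈ univ.filter (fun p : V × V => p.1 ∈ A ∧ p.2 ∉ A ∧ G.Adj p.1 p.2) |
      p.1 = v} = {v} ×ˢ (G.neighborFinset v \ A) := by
    ext ⟨a, b⟩
    simp only [mem_filter, mem_univ, true_and, mem_product, mem_singleton, mem_sdiff,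
      mem_neighborFinset]
    constructor
    · rintro ⟨⟨-, hb, hab⟩, rfl⟩; exact ⟨rfl, hab, hb⟩
    · rintro ⟨rfl, hab, hb⟩; exact ⟨⟨hv, hb, hab⟩, rfl⟩
  rw [hfiber, card_product, card_singleton, one_mul]

lemma crossingEdges_compl : crossingEdges G Aᶜ = crossingEdges G A :=
  card_bij' (fun p _ => p.swap) (fun p _ => p.swap)
    (fun p hp => by simp_all [G.adj_comm]) (fun p hp => by simp_all [G.adj_comm])
    (fun _ _ => rfl) (fun _ _ => rfl)

lemma card_mul_le_crossingEdges : #A * (G.minDegree + 1 - #A) ≤ crossingEdges G A := by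
  rw [crossingEdges_eq_sum, ← smul_eq_mul, ← sum_const]
  refine sum_le_sum fun v hv => ?_
  have hcover : G.neighborFinset v ⊆ G.neighborFinset v \ A ∪ A.erase v := fun w hw => by
    have hwv : w ≠ v := (G.ne_of_adj ((G.mem_neighborFinset v w).1 hw)).symm
    by_cases hwA : w ∈ A
    · exact mem_union_right _ (mem_erase.2 ⟨hwv, hwA⟩)
    · exact mem_union_left _ (mem_sdiff.2 ⟨hw, hwA⟩)
  have hdeg : G.minDegree ≤ #(G.neighborFinset v \ A) + (#A - 1) := calc
    G.minDegree ≤ G.degree v := G.minDegree_le_degree v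
    _ = #(G.neighborFinset v) := (G.card_neighborFinset_eq_degree v).symm
    _ ≤ #(G.neighborFinset v \ A ∪ A.erase v) := card_le_card hcover
    _ ≤ #(G.neighborFinset v \ A) + #(A.erase v) := card_union_le _ _
    _ = #(G.neighborFinset v \ A) + (#A - 1) := by rw [card_erase_of_mem hv]
  have hApos : 0 < #A := card_pos.2 ⟨v, hv⟩
  omega

end CrossingEdges

/-- `a (δ + 1 - a)` is concave in `a`, so on `2 ≤ a ≤ n / 2` it is smallest at the endpoints,
where it is at least `n`. -/
lemma card_le_crossingEdges_of_two_mul_card_le [Fintype V] {G : SimpleGraph V}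
    (hδ : Fintype.card V + 2 ≤ 2 * G.minDegree) {A : Finset V} (hA : 2 ≤ #A)
    (hAn : 2 * #A ≤ Fintype.card V) :
    Fintype.card V ≤ crossingEdges G A := by
  have hc := card_mul_le_crossingEdges G A
  zify [(by omega : #A ≤ G.minDegree + 1)] at hc hA hAn hδ ⊢
  nlinarith [mul_nonneg (sub_nonneg.2 hA) (sub_nonneg.2 hAn)]

lemma card_le_crossingEdges [Fintype V] {G : SimpleGraph V}
    (hδ : Fintype.card V + 2 ≤ 2 * G.minDegree) {A : Finset V} (hA : 2 ≤ #A) (hAc : 2 ≤ #Aᶜ) :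
    Fintype.card V ≤ crossingEdges G A := by
  have hcompl : #Aᶜ + #A = Fintype.card V := card_compl_add_card A
  rcases le_total (2 * #A) (Fintype.card V) with hAn | hAn
  · exact card_le_crossingEdges_of_two_mul_card_le hδ hA hAn
  · rw [← crossingEdges_compl]
    exact card_le_crossingEdges_of_two_mul_card_le hδ hAc (by omega)

section EdgeScramble

variable [Fintype V] {G : SimpleGraph V}

lemma mem_edgeScramble {E : Finset V} :
    E ∈ edgeScramble G ↔ ∃ u v, G.Adj u v ∧ E = {u, v} := by
  simp [edgeScramble]

lemma card_eq_two_of_mem_edgeScramble {E : Finset V} (hE : E ∈ edgeScramble G) : #E = 2 := by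
  obtain ⟨u, v, huv, rfl⟩ := mem_edgeScramble.1 hE
  exact card_pair huv.ne

lemma forall_inter_nonempty_edgeScramble_iff {C : Finset V} :
    (∀ E ∈ edgeScramble G, (E ∩ C).Nonempty) ↔ G.IsIndepSet ↑Cᶜ := by
  simp only [mem_edgeScramble, IsIndepSet, Set.Pairwise, coe_compl, Set.mem_compl_iff, mem_coe]
  constructor
  · rintro hhit u hu v hv - huv
    obtain ⟨w, hw⟩ := hhit _ ⟨u, v, huv, rfl⟩
    simp only [mem_inter, mem_insert, mem_singleton] at hw
    rcases hw with ⟨rfl | rfl, hwC⟩ <;> contradiction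
  · rintro hind _ ⟨u, v, huv, rfl⟩
    by_contra hempty
    simp only [not_nonempty_iff_eq_empty, eq_empty_iff_forall_notMem, mem_inter, mem_insert,
      mem_singleton] at hempty
    exact hind (fun hu => hempty u ⟨Or.inl rfl, hu⟩) (fun hv => hempty v ⟨Or.inr rfl, hv⟩)
      huv.ne huv

lemma indepNum_eq_simpleGraph_indepNum : _root_.indepNum G = G.indepNum := by
  simp [_root_.indepNum, SimpleGraph.indepNum, isNIndepSet_iff, IsIndepSet, Set.Pairwise]

lemma hitNum_edgeScramble : hitNum (edgeScramble G) = Fintype.card V - _root_.indepNum G := by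
  simp only [hitNum, forall_inter_nonempty_edgeScramble_iff, indepNum_eq_simpleGraph_indepNum]
  obtain ⟨T, hT, hTcard⟩ := G.exists_isNIndepSet_indepNum
  refine le_antisymm (Nat.sInf_le ⟨Tᶜ, by simpa using hT, by rw [card_compl, hTcard]⟩) ?_
  refine le_csInf ⟨_, Tᶜ, by simpa using hT, rfl⟩ ?_
  rintro _ ⟨C, hC, rfl⟩
  have := hC.card_le_indepNum
  rw [card_compl] at this
  omega

lemma card_le_cutNum_edgeScramble (hδ : Fintype.card V + 2 ≤ 2 * G.minDegree) :
    (Fintype.card V : ℕ∞) ≤ cutNum G (edgeScramble G) := by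
  refine le_sInf ?_
  rintro _ ⟨A, ⟨E, hE, hEA⟩, ⟨E', hE', hE'A⟩, rfl⟩
  exact Nat.cast_le.2 <| card_le_crossingEdges hδ
    (card_eq_two_of_mem_edgeScramble hE ▸ card_le_card hEA)
    (card_eq_two_of_mem_edgeScramble hE' ▸ card_le_card hE'A)

end EdgeScramble

theorem stmt7_general [Fintype V] (G : SimpleGraph V)
    (hδ : ((Fintype.card V : ℝ)) / 2 + 1 ≤ (G.minDegree : ℝ)) :
    scrambleOrder G (edgeScramble G) = Fintype.card V - _root_.indepNum G := by
  have hδ' : Fintype.card V + 2 ≤ 2 * G.minDegree := by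
    exact_mod_cast (by linarith : (Fintype.card V : ℝ) + 2 ≤ 2 * G.minDegree)
  have hcut : ((Fintype.card V - _root_.indepNum G : ℕ) : ℕ∞) ≤ cutNum G (edgeScramble G) :=
    (Nat.cast_le.2 (Nat.sub_le _ _)).trans (card_le_cutNum_edgeScramble hδ')
  rw [scrambleOrder, hitNum_edgeScramble, min_eq_left hcut, ENat.toNat_natCast]

theorem stmt7 [Fintype V] [Nonempty V] (G : SimpleGraph V)
    (hδ : ((Fintype.card V : ℝ)) / 2 + 1 ≤ (G.minDegree : ℝ)) :
    scrambleOrder G (edgeScramble G) = Fintype.card V - _root_.indepNum G :=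
  stmt7_general G hδ
end

section
/- If G and H are connected graphs each on at least 2 vertices, then sn(G □ H) ≥ max( min(|V(H)|, |V(G)|·λ(H)), min(|V(G)|, |V(H)|·λ(G)) ). -/
open SimpleGraph Finset

attribute [local instance] Classical.propDecidable

variable {V : Type*}

lemma edgeConn_le_crossing [Fintype V] (G : SimpleGraph V) (A : Finset V)
    {b0 b1 : V} (h0 : b0 ∈ A) (h1 : b1 ∉ A) :
    edgeConnectivity G ≤ crossingEdges G A := by
  classical
  set P := Finset.univ.filter (fun p : V × V => p.1 ∈ A ∧ p.2 ∉ A ∧ G.Adj p.1 p.2) with hP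
  set D : Finset (Sym2 V) := P.image (fun p => s(p.1, p.2)) with hD
  have hsub : (↑D : Set (Sym2 V)) ⊆ G.edgeSet := by
    intro e he
    simp only [hD, Finset.coe_image, Set.mem_image] at he
    obtain ⟨p, hp, rfl⟩ := he
    simp only [hP, Finset.mem_coe, Finset.mem_filter] at hp
    exact hp.2.2.2
  have hmemD : ∀ x y : V, x ∈ A → y ∉ A → G.Adj x y → s(x, y) ∈ D := by
    intro x y hx hy hadj
    exact Finset.mem_image.2 ⟨(x, y), by simp [hP, hx, hy, hadj], rfl⟩
  have hwalk : ∀ x y : V, (G.deleteEdges ↑D).Walk x y → x ∈ A → y ∈ A := by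
    intro x y w
    induction w with
    | nil => exact id
    | cons h w ih =>
      intro hx
      apply ih
      by_contra hv
      rw [deleteEdges_adj] at h
      exact h.2 (hmemD _ _ hx hv h.1)
  have hdis : ¬ (G.deleteEdges ↑D).Connected := by
    intro hc
    obtain ⟨w⟩ := hc.preconnected b0 b1
    exact h1 (hwalk b0 b1 w h0)
  have : edgeConnectivity G ≤ D.card :=
    Nat.sInf_le ⟨D, hsub, rfl, hdis⟩
  exact this.trans (Finset.card_image_le)

section Egg
variable {α β : Type*} [Fintype α] [Fintype β]

lemma egg_connected_col (G : SimpleGraph α) (H : SimpleGraph β) (hG : G.Connected) (b : β) :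
    ((G □ H).induce ((Finset.univ.filter (fun p : α × β => p.2 = b) : Finset (α × β)) : Set (α × β))).Connected := by
  classical
  have hne : Nonempty α := hG.nonempty
  obtain ⟨a0⟩ := hne
  set s : Set (α × β) := ((Finset.univ.filter (fun p : α × β => p.2 = b) : Finset (α × β)) : Set (α × β)) with hs
  have hmem : ∀ a : α, (a, b) ∈ s := by intro a; simp [hs]
  let φ : G →g (G □ H).induce s :=
    { toFun := fun a => ⟨(a, b), hmem a⟩,
      map_rel' := by
        intro a a' h
        simp only [comap_adj, Function.Embedding.coe_subtype, boxProd_adj]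
        exact Or.inl ⟨h, trivial⟩ }
  rw [connected_iff]
  refine ⟨?_, ⟨⟨(a0, b), hmem a0⟩⟩⟩
  intro x y
  have hx : (x : α × β).2 = b := by have := x.2; simpa [hs] using this
  have hy : (y : α × β).2 = b := by have := y.2; simpa [hs] using this
  have hr := (hG.preconnected (x : α × β).1 (y : α × β).1).map φ
  have hx' : φ (x : α × β).1 = x := Subtype.ext (Prod.ext rfl hx.symm)
  have hy' : φ (y : α × β).1 = y := Subtype.ext (Prod.ext rfl hy.symm)
  rwa [hx', hy'] at hr

lemma sum_crossing_col (G : SimpleGraph α) (H : SimpleGraph β) (A : Finset (α × β)) :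
    ∑ a : α, crossingEdges H (Finset.univ.filter (fun bb => (a, bb) ∈ A)) ≤
      crossingEdges (G □ H) A := by
  classical
  set Ra : α → Finset β := fun a => Finset.univ.filter (fun bb => (a, bb) ∈ A) with hRa
  set T := Finset.univ.filter
    (fun p : (α × β) × (α × β) => p.1 ∈ A ∧ p.2 ∉ A ∧ (G □ H).Adj p.1 p.2) with hT
  set f : α → Finset ((α × β) × (α × β)) := fun a =>
    (Finset.univ.filter (fun q : β × β => q.1 ∈ Ra a ∧ q.2 ∉ Ra a ∧ H.Adj q.1 q.2)).image
      (fun q => ((a, q.1), (a, q.2))) with hf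
  have hcard : ∀ a, (f a).card = crossingEdges H (Ra a) := by
    intro a
    rw [hf]
    exact Finset.card_image_of_injective _ (by
      intro q q' h
      have h1 : q.1 = q'.1 := congrArg (fun z => z.1.2) h
      have h2 : q.2 = q'.2 := congrArg (fun z => z.2.2) h
      exact Prod.ext h1 h2)
  have hsub : Finset.univ.biUnion f ⊆ T := by
    intro x hx
    obtain ⟨a, -, hx⟩ := Finset.mem_biUnion.1 hx
    simp only [hf, Finset.mem_image, Finset.mem_filter, Finset.mem_univ, true_and] at hx
    obtain ⟨q, ⟨h1, h2, h3⟩, rfl⟩ := hx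
    simp only [hRa, Finset.mem_filter, Finset.mem_univ, true_and] at h1 h2
    simp only [hT, Finset.mem_filter, Finset.mem_univ, true_and]
    exact ⟨h1, h2, Or.inr ⟨h3, rfl⟩⟩
  have hdisj : ∀ a ∈ Finset.univ, ∀ a' ∈ (Finset.univ : Finset α), a ≠ a' →
      Disjoint (f a) (f a') := by
    intro a _ a' _ hne
    rw [Finset.disjoint_left]
    intro x hx hx'
    simp only [hf, Finset.mem_image] at hx hx'
    obtain ⟨q, -, rfl⟩ := hx
    obtain ⟨q', -, he⟩ := hx'
    exact hne (congrArg (fun z => z.1.1) he).symm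
  calc ∑ a : α, crossingEdges H (Ra a) = ∑ a : α, (f a).card := by
        simp_rw [hcard]
    _ = (Finset.univ.biUnion f).card := (Finset.card_biUnion hdisj).symm
    _ ≤ T.card := Finset.card_le_card hsub
    _ = crossingEdges (G □ H) A := by rw [crossingEdges, hT]; congr!

end Egg

lemma scrambleOrder_le_card [Fintype V] (G : SimpleGraph V) (S : Finset (Finset V))
    (hS : IsScramble G S) : scrambleOrder G S ≤ Fintype.card V := by
  have h1 : hitNum S ≤ Fintype.card V :=
    Nat.sInf_le ⟨Finset.univ, fun E hE => by simpa using (hS.2 E hE).1, Finset.card_univ⟩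
  refine le_trans ?_ h1
  rw [scrambleOrder]
  calc (min (↑(hitNum S)) (cutNum G S)).toNat ≤ ((hitNum S : ℕ∞)).toNat :=
        ENat.toNat_le_toNat (min_le_left _ _) (by simp)
    _ = hitNum S := by simp

lemma mem_inter_classical {E C : Finset V} {x : V} (h : x ∈ E ∩ C) : x ∈ E ∧ x ∈ C := by
  classical
  constructor
  · exact Finset.mem_of_mem_inter_left h
  · exact Finset.mem_of_mem_inter_right h

lemma le_hitNum {S : Finset (Finset V)} {n : ℕ} (C0 : Finset V)
    (hC0 : ∀ E ∈ S, (E ∩ C0).Nonempty)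
    (h : ∀ C : Finset V, (∀ E ∈ S, (E ∩ C).Nonempty) → n ≤ C.card) : n ≤ hitNum S := by
  rw [hitNum]
  have hne' : {k | ∃ C : Finset V, (∀ E ∈ S, (E ∩ C).Nonempty) ∧ C.card = k}.Nonempty :=
    ⟨_, C0, hC0, rfl⟩
  obtain ⟨C, hC, hCc⟩ := Nat.sInf_mem hne'
  exact (h C hC).trans_eq hCc

section Main
variable {α β : Type*} [Fintype α] [Fintype β]

lemma bound_col (G : SimpleGraph α) (H : SimpleGraph β)
    (hG : G.Connected) (hH : H.Connected) :
    min (Fintype.card β) (Fintype.card α * edgeConnectivity H) ≤ scrambleNumber (G □ H) := by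
  classical
  obtain ⟨a0⟩ := hG.nonempty
  have : Nonempty β := hH.nonempty
  set Eb : β → Finset (α × β) := fun b => Finset.univ.filter (fun p => p.2 = b) with hEb
  set S := Finset.univ.image Eb with hS
  have hmemEb : ∀ a b, (a, b) ∈ Eb b := by intro a b; simp [hEb]
  have hScr : IsScramble (G □ H) S := by
    constructor
    · exact Finset.univ_nonempty.image _
    · intro E hE
      obtain ⟨b, -, rfl⟩ := Finset.mem_image.1 hE
      exact ⟨⟨(a0, b), hmemEb a0 b⟩, egg_connected_col G H hG b⟩
  have hhit : Fintype.card β ≤ hitNum S := by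
    apply le_hitNum Finset.univ (fun E hE => by simpa using (hScr.2 E hE).1)
    intro C hC
    choose c hc using fun b => hC (Eb b) (Finset.mem_image_of_mem Eb (Finset.mem_univ b))
    have hc' : ∀ b, c b ∈ Eb b ∧ c b ∈ C := by
      intro b
      exact mem_inter_classical (hc b)
    have hle : Fintype.card β ≤ C.card := by
      rw [← Finset.card_univ]
      apply Finset.card_le_card_of_injOn c
      · intro b _; exact (hc' b).2
      · intro b _ b' _ h
        have h1 : (c b).2 = b := by
          have := (hc' b).1; simpa [hEb] using this
        have h2 : (c b').2 = b' := by
          have := (hc' b').1; simpa [hEb] using this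
        rw [← h1, ← h2, h]
    exact hle
  have hcut : (↑(Fintype.card α * edgeConnectivity H) : ℕ∞) ≤ cutNum (G □ H) S := by
    apply le_sInf
    rintro k ⟨A, ⟨E, hES, hEA⟩, ⟨E', hE'S, hE'A⟩, rfl⟩
    obtain ⟨b0, -, rfl⟩ := Finset.mem_image.1 hES
    obtain ⟨b1, -, rfl⟩ := Finset.mem_image.1 hE'S
    have h0 : ∀ a, (a, b0) ∈ A := fun a => hEA (hmemEb a b0)
    have h1 : ∀ a, (a, b1) ∉ A := fun a => by
      have := hE'A (hmemEb a b1); simpa [Finset.mem_compl] using this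
    have hper : ∀ a : α, edgeConnectivity H ≤
        crossingEdges H (Finset.univ.filter (fun bb => (a, bb) ∈ A)) := fun a =>
      edgeConn_le_crossing H _ (b0 := b0) (b1 := b1) (by simp [h0 a]) (by simp [h1 a])
    have hfin : Fintype.card α * edgeConnectivity H ≤ crossingEdges (G □ H) A := by
      calc Fintype.card α * edgeConnectivity H
          = ∑ _a : α, edgeConnectivity H := by
            rw [Finset.sum_const, Finset.card_univ, smul_eq_mul]
        _ ≤ ∑ a : α, crossingEdges H (Finset.univ.filter (fun bb => (a, bb) ∈ A)) :=
            Finset.sum_le_sum (fun a _ => hper a)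
        _ ≤ crossingEdges (G □ H) A := sum_crossing_col G H A
    exact_mod_cast hfin
  set m := min (Fintype.card β) (Fintype.card α * edgeConnectivity H) with hm
  have hmh : (m : ℕ∞) ≤ (hitNum S : ℕ∞) := by
    exact_mod_cast (min_le_left _ _).trans hhit
  have hmc : (m : ℕ∞) ≤ cutNum (G □ H) S :=
    le_trans (by exact_mod_cast min_le_right _ _) hcut
  have hord : m ≤ scrambleOrder (G □ H) S := by
    rw [scrambleOrder]
    have hlem : (m : ℕ∞) ≤ min (↑(hitNum S)) (cutNum (G □ H) S) := le_min hmh hmc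
    have hnt : min (↑(hitNum S)) (cutNum (G □ H) S) ≠ ⊤ :=
      ne_top_of_le_ne_top (by simp) (min_le_left _ _)
    have := ENat.toNat_le_toNat hlem hnt
    simpa using this
  have hbdd : BddAbove {k | ∃ S : Finset (Finset (α × β)),
      IsScramble (G □ H) S ∧ k = scrambleOrder (G □ H) S} := by
    refine ⟨Fintype.card (α × β), ?_⟩
    rintro k ⟨S', hS', rfl⟩
    exact scrambleOrder_le_card _ _ hS'
  exact hord.trans (le_csSup hbdd ⟨S, hScr, rfl⟩)

end Main

section Main2
variable {α β : Type*} [Fintype α] [Fintype β]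

lemma egg_connected_row (G : SimpleGraph α) (H : SimpleGraph β) (hH : H.Connected) (a : α) :
    ((G □ H).induce ((Finset.univ.filter (fun p : α × β => p.1 = a) : Finset (α × β)) : Set (α × β))).Connected := by
  classical
  obtain ⟨b0⟩ := hH.nonempty
  set s : Set (α × β) := ((Finset.univ.filter (fun p : α × β => p.1 = a) : Finset (α × β)) : Set (α × β)) with hs
  have hmem : ∀ b : β, (a, b) ∈ s := by intro b; simp [hs]
  let φ : H →g (G □ H).induce s :=
    { toFun := fun b => ⟨(a, b), hmem b⟩,
      map_rel' := by
        intro b b' h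
        simp only [comap_adj, Function.Embedding.coe_subtype, boxProd_adj]
        exact Or.inr ⟨h, trivial⟩ }
  rw [connected_iff]
  refine ⟨?_, ⟨⟨(a, b0), hmem b0⟩⟩⟩
  intro x y
  have hx : (x : α × β).1 = a := by have := x.2; simpa [hs] using this
  have hy : (y : α × β).1 = a := by have := y.2; simpa [hs] using this
  have hr := (hH.preconnected (x : α × β).2 (y : α × β).2).map φ
  have hx' : φ (x : α × β).2 = x := Subtype.ext (Prod.ext hx.symm rfl)
  have hy' : φ (y : α × β).2 = y := Subtype.ext (Prod.ext hy.symm rfl)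
  rwa [hx', hy'] at hr

lemma sum_crossing_row (G : SimpleGraph α) (H : SimpleGraph β) (A : Finset (α × β)) :
    ∑ b : β, crossingEdges G (Finset.univ.filter (fun aa => (aa, b) ∈ A)) ≤
      crossingEdges (G □ H) A := by
  classical
  set Rb : β → Finset α := fun b => Finset.univ.filter (fun aa => (aa, b) ∈ A) with hRb
  set T := Finset.univ.filter
    (fun p : (α × β) × (α × β) => p.1 ∈ A ∧ p.2 ∉ A ∧ (G □ H).Adj p.1 p.2) with hT
  set f : β → Finset ((α × β) × (α × β)) := fun b =>
    (Finset.univ.filter (fun q : α × α => q.1 ∈ Rb b ∧ q.2 ∉ Rb b ∧ G.Adj q.1 q.2)).image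
      (fun q => ((q.1, b), (q.2, b))) with hf
  have hcard : ∀ b, (f b).card = crossingEdges G (Rb b) := by
    intro b
    rw [hf]
    exact Finset.card_image_of_injective _ (by
      intro q q' h
      have h1 : q.1 = q'.1 := congrArg (fun z => z.1.1) h
      have h2 : q.2 = q'.2 := congrArg (fun z => z.2.1) h
      exact Prod.ext h1 h2)
  have hsub : Finset.univ.biUnion f ⊆ T := by
    intro x hx
    obtain ⟨b, -, hx⟩ := Finset.mem_biUnion.1 hx
    simp only [hf, Finset.mem_image, Finset.mem_filter, Finset.mem_univ, true_and] at hx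
    obtain ⟨q, ⟨h1, h2, h3⟩, rfl⟩ := hx
    simp only [hRb, Finset.mem_filter, Finset.mem_univ, true_and] at h1 h2
    simp only [hT, Finset.mem_filter, Finset.mem_univ, true_and]
    exact ⟨h1, h2, Or.inl ⟨h3, rfl⟩⟩
  have hdisj : ∀ b ∈ Finset.univ, ∀ b' ∈ (Finset.univ : Finset β), b ≠ b' →
      Disjoint (f b) (f b') := by
    intro b _ b' _ hne
    rw [Finset.disjoint_left]
    intro x hx hx'
    simp only [hf, Finset.mem_image] at hx hx'
    obtain ⟨q, -, rfl⟩ := hx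
    obtain ⟨q', -, he⟩ := hx'
    exact hne (congrArg (fun z => z.1.2) he).symm
  calc ∑ b : β, crossingEdges G (Rb b) = ∑ b : β, (f b).card := by
        simp_rw [hcard]
    _ = (Finset.univ.biUnion f).card := (Finset.card_biUnion hdisj).symm
    _ ≤ T.card := Finset.card_le_card hsub
    _ = crossingEdges (G □ H) A := by rw [crossingEdges, hT]; congr!

lemma bound_row (G : SimpleGraph α) (H : SimpleGraph β)
    (hG : G.Connected) (hH : H.Connected) :
    min (Fintype.card α) (Fintype.card β * edgeConnectivity G) ≤ scrambleNumber (G □ H) := by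
  classical
  obtain ⟨b0⟩ := hH.nonempty
  have : Nonempty α := hG.nonempty
  set Ea : α → Finset (α × β) := fun a => Finset.univ.filter (fun p => p.1 = a) with hEa
  set S := Finset.univ.image Ea with hS
  have hmemEa : ∀ a b, (a, b) ∈ Ea a := by intro a b; simp [hEa]
  have hScr : IsScramble (G □ H) S := by
    constructor
    · exact Finset.univ_nonempty.image _
    · intro E hE
      obtain ⟨a, -, rfl⟩ := Finset.mem_image.1 hE
      exact ⟨⟨(a, b0), hmemEa a b0⟩, egg_connected_row G H hH a⟩
  have hhit : Fintype.card α ≤ hitNum S := by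
    apply le_hitNum Finset.univ (fun E hE => by simpa using (hScr.2 E hE).1)
    intro C hC
    choose c hc using fun a => hC (Ea a) (Finset.mem_image_of_mem Ea (Finset.mem_univ a))
    have hc' : ∀ a, c a ∈ Ea a ∧ c a ∈ C := fun a => mem_inter_classical (hc a)
    have hle : Fintype.card α ≤ C.card := by
      rw [← Finset.card_univ]
      apply Finset.card_le_card_of_injOn c
      · intro a _; exact (hc' a).2
      · intro a _ a' _ h
        have h1 : (c a).1 = a := by have := (hc' a).1; simpa [hEa] using this
        have h2 : (c a').1 = a' := by have := (hc' a').1; simpa [hEa] using this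
        rw [← h1, ← h2, h]
    exact hle
  have hcut : (↑(Fintype.card β * edgeConnectivity G) : ℕ∞) ≤ cutNum (G □ H) S := by
    apply le_sInf
    rintro k ⟨A, ⟨E, hES, hEA⟩, ⟨E', hE'S, hE'A⟩, rfl⟩
    obtain ⟨a0, -, rfl⟩ := Finset.mem_image.1 hES
    obtain ⟨a1, -, rfl⟩ := Finset.mem_image.1 hE'S
    have h0 : ∀ b, (a0, b) ∈ A := fun b => hEA (hmemEa a0 b)
    have h1 : ∀ b, (a1, b) ∉ A := fun b => by
      have := hE'A (hmemEa a1 b); simpa [Finset.mem_compl] using this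
    have hper : ∀ b : β, edgeConnectivity G ≤
        crossingEdges G (Finset.univ.filter (fun aa => (aa, b) ∈ A)) := fun b =>
      edgeConn_le_crossing G _ (b0 := a0) (b1 := a1) (by simp [h0 b]) (by simp [h1 b])
    have hfin : Fintype.card β * edgeConnectivity G ≤ crossingEdges (G □ H) A := by
      calc Fintype.card β * edgeConnectivity G
          = ∑ _b : β, edgeConnectivity G := by
            rw [Finset.sum_const, Finset.card_univ, smul_eq_mul]
        _ ≤ ∑ b : β, crossingEdges G (Finset.univ.filter (fun aa => (aa, b) ∈ A)) :=
            Finset.sum_le_sum (fun b _ => hper b)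
        _ ≤ crossingEdges (G □ H) A := sum_crossing_row G H A
    exact_mod_cast hfin
  set m := min (Fintype.card α) (Fintype.card β * edgeConnectivity G) with hm
  have hmh : (m : ℕ∞) ≤ (hitNum S : ℕ∞) := by
    exact_mod_cast (min_le_left _ _).trans hhit
  have hmc : (m : ℕ∞) ≤ cutNum (G □ H) S :=
    le_trans (by exact_mod_cast min_le_right _ _) hcut
  have hord : m ≤ scrambleOrder (G □ H) S := by
    rw [scrambleOrder]
    have hlem : (m : ℕ∞) ≤ min (↑(hitNum S)) (cutNum (G □ H) S) := le_min hmh hmc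
    have hnt : min (↑(hitNum S)) (cutNum (G □ H) S) ≠ ⊤ :=
      ne_top_of_le_ne_top (by simp) (min_le_left _ _)
    have := ENat.toNat_le_toNat hlem hnt
    simpa using this
  have hbdd : BddAbove {k | ∃ S : Finset (Finset (α × β)),
      IsScramble (G □ H) S ∧ k = scrambleOrder (G □ H) S} := by
    refine ⟨Fintype.card (α × β), ?_⟩
    rintro k ⟨S', hS', rfl⟩
    exact scrambleOrder_le_card _ _ hS'
  exact hord.trans (le_csSup hbdd ⟨S, hScr, rfl⟩)

end Main2

theorem stmt14 {α β : Type*} [Fintype α] [Fintype β]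
    (G : SimpleGraph α) (H : SimpleGraph β)
    (hG : G.Connected) (hH : H.Connected)
    (hα : 2 ≤ Fintype.card α) (hβ : 2 ≤ Fintype.card β) :
    max (min (Fintype.card β) (Fintype.card α * edgeConnectivity H))
      (min (Fintype.card α) (Fintype.card β * edgeConnectivity G)) ≤
      scrambleNumber (G □ H) :=
  max_le (bound_col G H hG hH) (bound_row G H hG hH)
end
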